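/- Suppose (X_0,Y_0), (X_1,Y_1), ..., (X_N,Y_N) are i.i.d. (hence exchangeable), s is a measurable positive score function, and define the e-variable E = (N+1)·s(X_0,Y_0) / (Σ_{i=0}^N s(X_i,Y_i)). Let α̂ be any (0,∞)-valued random variable and C a random set such that the event {Y_0 ∉ C} equals the event {E ≥ 1/α̂}. Then E[ 1(Y_0 ∉ C) / α̂ ] ≤ 1. -/

import Mathlib

open MeasureTheory ProbabilityTheory Classical

section aux

variable {𝓦 : Type*} [MeasurableSpace 𝓦]

/-- Under the product (i.i.d.) measure, the expectation of `s(z j)/∑ᵢ s(z i)`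
does not depend on `j`. -/
lemma bcp_aux_integral_eq (N : ℕ) (ν : Measure 𝓦) [IsProbabilityMeasure ν]
    (s : 𝓦 → ℝ) (hs_meas : Measurable s) (hs_pos : ∀ z, 0 < s z)
    (j : Fin (N + 1)) :
    ∫ z : Fin (N + 1) → 𝓦, s (z j) / ∑ i, s (z i) ∂(Measure.pi fun _ => ν)
      = ∫ z : Fin (N + 1) → 𝓦, s (z 0) / ∑ i, s (z i) ∂(Measure.pi fun _ => ν) := by
  set σ : Equiv.Perm (Fin (N + 1)) := Equiv.swap 0 j with hσ
  have hT : MeasurePreserving (MeasurableEquiv.piCongrLeft (fun _ : Fin (N+1) => 𝓦) σ)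
      (Measure.pi fun _ => ν) (Measure.pi fun _ => ν) :=
    measurePreserving_piCongrLeft (fun _ => ν) σ
  have hcomp := hT.integral_comp
      (MeasurableEquiv.piCongrLeft (fun _ : Fin (N+1) => 𝓦) σ).measurableEmbedding
      (fun z : Fin (N + 1) → 𝓦 => s (z 0) / ∑ i, s (z i))
  rw [← hcomp]
  refine integral_congr_ae (Filter.Eventually.of_forall fun z => ?_)
  have happ : ∀ i : Fin (N+1),
      (MeasurableEquiv.piCongrLeft (fun _ : Fin (N+1) => 𝓦) σ) z i = z (σ.symm i) := by
    intro i
    conv_lhs => rw [show i = σ (σ.symm i) by simp]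
    exact Equiv.piCongrLeft_apply_apply (fun _ => 𝓦) σ z (σ.symm i)
  simp only [happ]
  have h0 : σ.symm 0 = j := by simp [hσ]
  have hsum : ∑ i, s (z (σ.symm i)) = ∑ i, s (z i) :=
    Equiv.sum_comp σ.symm (fun i => s (z i))
  rw [h0, hsum]

end aux

/-- Reliability guarantee of backward conformal prediction: for i.i.d. data
`(Xᵢ,Yᵢ)`, a measurable positive score `s`, the e-variable
`E = (N+1)·s(X₀,Y₀)/Σᵢ s(Xᵢ,Yᵢ)`, any positive miscoverage estimate `α̂`, and
a random prediction set `C` such that `{Y₀ ∉ C} = {E ≥ 1/α̂}`, we have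
`𝔼[𝟙(Y₀ ∉ C)/α̂] ≤ 1`. -/
theorem bcp_reliability
    {Ω 𝓧 𝓨 : Type*} [MeasurableSpace Ω] [MeasurableSpace 𝓧] [MeasurableSpace 𝓨]
    (μ : Measure Ω) [IsProbabilityMeasure μ]
    (N : ℕ) (Z : Fin (N + 1) → Ω → 𝓧 × 𝓨)
    (hmeas : ∀ i, Measurable (Z i))
    (hindep : iIndepFun Z μ)
    (hident : ∀ i, μ.map (Z i) = μ.map (Z 0))
    (s : 𝓧 × 𝓨 → ℝ) (hs_meas : Measurable s) (hs_pos : ∀ z, 0 < s z)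
    (E : Ω → ℝ)
    (hE : ∀ ω, E ω = ((N + 1 : ℝ) * s (Z 0 ω)) / ∑ i, s (Z i ω))
    (αhat : Ω → ℝ) (hαhat : ∀ ω, 0 < αhat ω)
    (C : Ω → Set 𝓨)
    (hC : ∀ ω, ((Z 0 ω).2 ∉ C ω) ↔ E ω ≥ 1 / αhat ω) :
    ∫ ω, (if (Z 0 ω).2 ∉ C ω then (1 : ℝ) else 0) / αhat ω ∂μ ≤ 1 := by
  classical
  set ν : Measure (𝓧 × 𝓨) := μ.map (Z 0) with hν
  haveI : IsProbabilityMeasure ν := Measure.isProbabilityMeasure_map (hmeas 0).aemeasurable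
  set W : Ω → (Fin (N + 1) → 𝓧 × 𝓨) := fun ω i => Z i ω with hW_def
  have hW : Measurable W := measurable_pi_lambda W hmeas
  set π : Measure (Fin (N + 1) → 𝓧 × 𝓨) := Measure.pi fun _ => ν with hπ
  -- sums are positive
  have hsum_pos : ∀ z : Fin (N + 1) → 𝓧 × 𝓨, 0 < ∑ i, s (z i) := fun z =>
    Finset.sum_pos (fun i _ => hs_pos _) Finset.univ_nonempty
  -- the map of μ under W is the product measure
  have hmap : μ.map W = π := by
    refine (Measure.pi_eq fun t ht => ?_).symm
    rw [Measure.map_apply hW (MeasurableSet.univ_pi fun i => ht i)]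
    have hpre : W ⁻¹' Set.univ.pi t = ⋂ i ∈ Finset.univ, Z i ⁻¹' t i := by
      ext ω; simp [Set.mem_pi, hW_def]
    rw [hpre, hindep.measure_inter_preimage_eq_mul Finset.univ (fun i _ => ht i)]
    refine Finset.prod_congr rfl fun i _ => ?_
    show μ (Z i ⁻¹' t i) = ν (t i)
    rw [← hident i, Measure.map_apply (hmeas i) (ht i)]
  -- measurability and integrability of the coordinate ratios
  have hf_meas : ∀ j : Fin (N + 1),
      Measurable (fun z : Fin (N + 1) → 𝓧 × 𝓨 => s (z j) / ∑ i, s (z i)) := fun j =>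
    (hs_meas.comp (measurable_pi_apply j)).div
      (Finset.measurable_sum Finset.univ fun i _ => hs_meas.comp (measurable_pi_apply i))
  have hf_nonneg : ∀ (j : Fin (N + 1)) (z : Fin (N + 1) → 𝓧 × 𝓨),
      0 ≤ s (z j) / ∑ i, s (z i) := fun j z =>
    div_nonneg (hs_pos _).le (hsum_pos z).le
  have hf_le_one : ∀ (j : Fin (N + 1)) (z : Fin (N + 1) → 𝓧 × 𝓨),
      s (z j) / ∑ i, s (z i) ≤ 1 := fun j z => by
    rw [div_le_one (hsum_pos z)]
    exact Finset.single_le_sum (fun i _ => (hs_pos (z i)).le) (Finset.mem_univ j)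
  have hf_int : ∀ j : Fin (N + 1),
      Integrable (fun z : Fin (N + 1) → 𝓧 × 𝓨 => s (z j) / ∑ i, s (z i)) π := fun j => by
    refine (integrable_const (1 : ℝ)).mono' (hf_meas j).aestronglyMeasurable
      (Filter.Eventually.of_forall fun z => ?_)
    rw [Real.norm_eq_abs, abs_of_nonneg (hf_nonneg j z)]
    exact hf_le_one j z
  -- the expectation of each ratio is 1/(N+1)
  have hsum_int : ((N : ℝ) + 1) * ∫ z, s (z 0) / ∑ i, s (z i) ∂π = 1 := by
    have h1 : ∑ j : Fin (N + 1), ∫ z, s (z j) / ∑ i, s (z i) ∂π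
        = ∫ z, ∑ j : Fin (N + 1), s (z j) / ∑ i, s (z i) ∂π :=
      (integral_finset_sum Finset.univ fun j _ => hf_int j).symm
    have h2 : ∀ z : Fin (N + 1) → 𝓧 × 𝓨,
        ∑ j : Fin (N + 1), s (z j) / ∑ i, s (z i) = 1 := fun z => by
      rw [← Finset.sum_div, div_self (hsum_pos z).ne']
    have h3 : ∑ j : Fin (N + 1), ∫ z, s (z j) / ∑ i, s (z i) ∂π
        = ((N : ℝ) + 1) * ∫ z, s (z 0) / ∑ i, s (z i) ∂π := by
      rw [Finset.sum_congr rfl fun j _ =>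
        bcp_aux_integral_eq N ν s hs_meas hs_pos j]
      simp [Finset.card_univ, mul_comm, hπ]
    rw [← h3, h1]
    simp only [h2]
    simp
  -- integral of E equals 1
  have hE_meas : Measurable E := by
    have : Measurable fun ω => ((N + 1 : ℝ) * s (Z 0 ω)) / ∑ i, s (Z i ω) :=
      (measurable_const.mul (hs_meas.comp (hmeas 0))).div
        (Finset.measurable_sum Finset.univ fun i _ => hs_meas.comp (hmeas i))
    simpa only [← hE] using this
  have hE_int_val : ∫ ω, E ω ∂μ = 1 := by
    have hEeq : ∀ ω, E ω = ((N : ℝ) + 1) * (s (W ω 0) / ∑ i, s (W ω i)) := fun ω => by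
      rw [hE ω, mul_div_assoc]
    calc ∫ ω, E ω ∂μ
        = ∫ ω, ((N : ℝ) + 1) * (s (W ω 0) / ∑ i, s (W ω i)) ∂μ := by
          exact integral_congr_ae (Filter.Eventually.of_forall hEeq)
      _ = ∫ z, ((N : ℝ) + 1) * (s (z 0) / ∑ i, s (z i)) ∂(μ.map W) :=
          (integral_map hW.aemeasurable
            (measurable_const.mul (hf_meas 0)).aestronglyMeasurable).symm
      _ = ((N : ℝ) + 1) * ∫ z, s (z 0) / ∑ i, s (z i) ∂π := by
          rw [hmap, integral_const_mul]
      _ = 1 := hsum_int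
  have hE_pos : ∀ ω, 0 < E ω := fun ω => by
    rw [hE ω]
    exact div_pos (mul_pos (by positivity) (hs_pos _)) (hsum_pos fun i => Z i ω)
  have hE_int : Integrable E μ := by
    refine (integrable_const ((N : ℝ) + 1)).mono' hE_meas.aestronglyMeasurable
      (Filter.Eventually.of_forall fun ω => ?_)
    rw [Real.norm_eq_abs, abs_of_nonneg (hE_pos ω).le, hE ω, div_le_iff₀ (hsum_pos _)]
    have h0 : s (Z 0 ω) ≤ ∑ i, s (Z i ω) :=
      Finset.single_le_sum (fun i _ => (hs_pos (Z i ω)).le) (Finset.mem_univ 0)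
    nlinarith [hs_pos (Z 0 ω)]
  -- pointwise bound and conclusion
  have hle : ∀ ω, (if (Z 0 ω).2 ∉ C ω then (1 : ℝ) else 0) / αhat ω ≤ E ω := fun ω => by
    by_cases h : (Z 0 ω).2 ∉ C ω
    · simp only [h, if_pos]
      have := (hC ω).mp h
      simpa [one_div] using this
    · simp only [h, if_neg, not_false_iff]
      simpa using (hE_pos ω).le
  calc ∫ ω, (if (Z 0 ω).2 ∉ C ω then (1 : ℝ) else 0) / αhat ω ∂μ
      ≤ ∫ ω, E ω ∂μ := by
        refine integral_mono_of_nonneg (Filter.Eventually.of_forall fun ω => ?_) hE_int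
          (Filter.Eventually.of_forall hle)
        exact div_nonneg (by split <;> norm_num) (hαhat ω).le
    _ = 1 := hE_int_val
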